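/- arXiv:2306.00638 — 2 statements merged into one kernel-verified Lean document; each statement's English description precedes it below -/
import Mathlib

section
/- Let F : ℝ^d → ℝ be λ-strongly convex and L-smooth with minimizer θ*. If θ₁ satisfies ‖θ₁ - θ*‖ ≤ (1/4)√(λ/L)·Δ and θ₂ satisfies ‖θ₂ - θ*'‖ ≤ (1/4)√(λ/L)·Δ where ‖θ*' - θ*‖ ≥ Δ, then F(θ₂) - F(θ₁) ≥ (λ/4)·Δ². -/
open InnerProductSpace

/-!
The gradient vanishes at the minimiser θ*, so strong convexity gives
`F θ₂ - F θ* ≥ (λ/2)‖θ₂ - θ*‖²`, where `‖θ₂ - θ*‖ ≥ (1 - s/4)Δ` with `s = √(λ/L)`.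
Strong convexity at θ₁ together with the Lipschitz gradient gives
`F θ₁ - F θ* ≤ (L - λ/2)‖θ₁ - θ*‖² ≤ (L - λ/2)(sΔ/4)²`. Writing `λ = s²L`, the difference
of the two bounds exceeds `(λ/4)Δ²` by `LΔ²s²(1 - s)(3 - s)/16 ≥ 0`.
-/

theorem IsLocalMin.hasGradientAt_eq_zero {E : Type*} [NormedAddCommGroup E]
    [InnerProductSpace ℝ E] [CompleteSpace E] {f : E → ℝ} {g a : E} (hmin : IsLocalMin f a)
    (hf : HasGradientAt f g a) :
    g = 0 := by
  simpa using hmin.hasFDerivAt_eq_zero hf.hasFDerivAt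

section

variable {E : Type*} [NormedAddCommGroup E] [InnerProductSpace ℝ E]
  {F : E → ℝ} {gradF : E → E} {lam L : ℝ} {x₀ : E}

theorem mul_sq_norm_sub_le_sub_of_strongConvex
    (hsc : ∀ x y, F y ≥ F x + ⟪gradF x, y - x⟫_ℝ + lam / 2 * ‖y - x‖ ^ 2) (hg : gradF x₀ = 0)
    (y : E) : lam / 2 * ‖y - x₀‖ ^ 2 ≤ F y - F x₀ := by
  have := hsc x₀ y
  rw [hg, inner_zero_left] at this
  linarith

theorem sub_le_mul_sq_norm_sub_of_strongConvex_of_lipschitz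
    (hsc : ∀ x y, F y ≥ F x + ⟪gradF x, y - x⟫_ℝ + lam / 2 * ‖y - x‖ ^ 2)
    (hsmooth : ∀ x y, ‖gradF x - gradF y‖ ≤ L * ‖x - y‖) (hg : gradF x₀ = 0) (x : E) :
    F x - F x₀ ≤ (L - lam / 2) * ‖x - x₀‖ ^ 2 := by
  have hgrad : ‖gradF x‖ ≤ L * ‖x - x₀‖ := by simpa [hg] using hsmooth x x₀
  have hinner : ⟪gradF x, x - x₀⟫_ℝ ≤ L * ‖x - x₀‖ ^ 2 :=
    calc ⟪gradF x, x - x₀⟫_ℝ ≤ ‖gradF x‖ * ‖x - x₀‖ := real_inner_le_norm _ _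
      _ ≤ L * ‖x - x₀‖ * ‖x - x₀‖ := by gcongr
      _ = L * ‖x - x₀‖ ^ 2 := by ring
  have := hsc x x₀
  rw [← neg_sub x x₀, inner_neg_right, norm_neg] at this
  linarith

end

theorem separation_gap {lam L Δ r₁ r₂ : ℝ} (hlam : 0 < lam) (hlamL : lam ≤ L) (hΔ : 0 ≤ Δ)
    (hr₁0 : 0 ≤ r₁) (hr₁ : r₁ ≤ Real.sqrt (lam / L) / 4 * Δ)
    (hr₂ : Δ - Real.sqrt (lam / L) / 4 * Δ ≤ r₂) :
    lam / 4 * Δ ^ 2 ≤ lam / 2 * r₂ ^ 2 - (L - lam / 2) * r₁ ^ 2 := by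
  set s := Real.sqrt (lam / L)
  have hL : 0 < L := hlam.trans_le hlamL
  have hs0 : 0 ≤ s := Real.sqrt_nonneg _
  have hs1 : s ≤ 1 := Real.sqrt_le_one.mpr ((div_le_one hL).mpr hlamL)
  have hlam_eq : lam = s ^ 2 * L := by
    rw [Real.sq_sqrt (by positivity), div_mul_cancel₀ _ hL.ne']
  have key : lam / 4 * Δ ^ 2 + L * Δ ^ 2 * (s ^ 2 * ((1 - s) * (3 - s))) / 16
      = lam / 2 * (Δ - s / 4 * Δ) ^ 2 - (L - lam / 2) * (s / 4 * Δ) ^ 2 := by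
    rw [hlam_eq]; ring
  have hrem : 0 ≤ L * Δ ^ 2 * (s ^ 2 * ((1 - s) * (3 - s))) / 16 := by
    have : 0 ≤ (1 - s) * (3 - s) := mul_nonneg (by linarith) (by linarith)
    positivity
  calc lam / 4 * Δ ^ 2 ≤ lam / 2 * (Δ - s / 4 * Δ) ^ 2 - (L - lam / 2) * (s / 4 * Δ) ^ 2 := by
        linarith
    _ ≤ lam / 2 * r₂ ^ 2 - (L - lam / 2) * r₁ ^ 2 := by
        gcongr
        · nlinarith
        · linarith

/-- separation of population losses of two clusters. -/
theorem cluster_loss_separation {d : ℕ}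
    (F : EuclideanSpace ℝ (Fin d) → ℝ) (gradF : EuclideanSpace ℝ (Fin d) → EuclideanSpace ℝ (Fin d))
    (lam L Δ : ℝ) (hlam : 0 < lam) (hlamL : lam ≤ L) (hΔ : 0 < Δ)
    (θstar θstar' θ₁ θ₂ : EuclideanSpace ℝ (Fin d))
    (hdiff : ∀ x, HasGradientAt F (gradF x) x)
    (hsc : ∀ x y, F y ≥ F x + ⟪gradF x, y - x⟫_ℝ + lam / 2 * ‖y - x‖ ^ 2)
    (hsmooth : ∀ x y, ‖gradF x - gradF y‖ ≤ L * ‖x - y‖)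
    (hmin : ∀ θ, F θstar ≤ F θ)
    (h1 : ‖θ₁ - θstar‖ ≤ 1 / 4 * Real.sqrt (lam / L) * Δ)
    (h2 : ‖θ₂ - θstar'‖ ≤ 1 / 4 * Real.sqrt (lam / L) * Δ)
    (hsep : ‖θstar' - θstar‖ ≥ Δ) :
    F θ₂ - F θ₁ ≥ lam / 4 * Δ ^ 2 := by
  have hg : gradF θstar = 0 :=
    IsLocalMin.hasGradientAt_eq_zero (.of_forall hmin) (hdiff θstar)
  have hfar : Δ - Real.sqrt (lam / L) / 4 * Δ ≤ ‖θ₂ - θstar‖ := by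
    have := norm_sub_le_norm_sub_add_norm_sub θstar' θ₂ θstar
    rw [norm_sub_rev θstar' θ₂] at this
    linarith
  have hgap := separation_gap hlam hlamL hΔ.le (norm_nonneg (θ₁ - θstar)) (by linarith) hfar
  have hup := sub_le_mul_sq_norm_sub_of_strongConvex_of_lipschitz hsc hsmooth hg θ₁
  have hlow := mul_sq_norm_sub_le_sub_of_strongConvex hsc hg θ₂
  linarith
end

section
/- Let v₁,…,v_m ∈ ℝ, μ ∈ ℝ, and 0 ≤ β < 1/2 with βm an integer. Let B ⊆ [m] be a set of 'bad' indices with |B| = α̃m, where α̃ ≤ β. Suppose |(1/((1-α̃)m))·Σ_{i∉B} v_i - μ| ≤ t and max_{i∉B}|v_i - μ| ≤ s. Then the β-trimmed mean v̄ (the average of the values remaining after removing the largest βm and the smallest βm entries) satisfies |v̄ - μ| ≤ (t + 3βs)/(1 - 2β). -/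
open Finset

/-- The coordinate of the `β`-trimmed mean: sort the values, discard the `b` smallest and
`b` largest, and average the rest. -/
noncomputable def trimmedMean {m : ℕ} (b : ℕ) (v : Fin m → ℝ) : ℝ :=
  (∑ i ∈ Finset.univ.filter (fun i : Fin m => b ≤ (i : ℕ) ∧ (i : ℕ) < m - b),
      v (Tuple.sort v i)) / (m - 2 * b : ℝ)

/-- robustness of the trimmed mean against a `β` fraction of bad values. -/
theorem trimmedMean_robust {m : ℕ} (hm : 0 < m) (v : Fin m → ℝ)
    (β : ℝ) (hβ0 : 0 ≤ β) (hβ2 : β < 1 / 2)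
    (b : ℕ) (hb : (b : ℝ) = β * m)
    (B : Finset (Fin m)) (hBcard : (B.card : ℝ) ≤ β * m)
    (μ t s : ℝ)
    (havg : |(∑ i ∈ Bᶜ, v i) / (Bᶜ.card : ℝ) - μ| ≤ t)
    (hmax : ∀ i ∈ Bᶜ, |v i - μ| ≤ s) :
    |trimmedMean b v - μ| ≤ (t + 3 * β * s) / (1 - 2 * β) := by
  classical
  set σ := Tuple.sort v with hσ
  set T : Finset (Fin m) :=
    Finset.univ.filter (fun i : Fin m => b ≤ (i : ℕ) ∧ (i : ℕ) < m - b) with hT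
  -- basic numerics
  have h2b : 2 * b < m := by
    have : (2 * (b : ℝ)) < m := by
      rw [hb]
      have := mul_lt_mul_of_pos_right hβ2 (by exact_mod_cast hm : (0:ℝ) < m)
      linarith
    exact_mod_cast this
  have hBb : B.card ≤ b := by
    have : (B.card : ℝ) ≤ (b : ℝ) := by rw [hb]; exact hBcard
    exact_mod_cast this
  -- bad indices in sorted coordinates
  set B' : Finset (Fin m) := B.map σ.symm.toEmbedding with hB'
  have hB'card : B'.card = B.card := Finset.card_map _
  have hB'mem : ∀ j : Fin m, j ∈ B' ↔ σ j ∈ B := by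
    intro j
    simp [hB', Finset.mem_map, Equiv.symm_apply_eq]
  -- every kept (untrimmed) value is within s of μ
  have hkept : ∀ i ∈ T, |v (σ i) - μ| ≤ s := by
    intro i hi
    rw [hT, Finset.mem_filter] at hi
    obtain ⟨-, hbi, him⟩ := hi
    have hmono : Monotone (v ∘ σ) := Tuple.monotone_sort v
    -- upper bound: some good index above i
    have hup : v (σ i) ≤ μ + s := by
      have hcard : 0 < ((Finset.Ici i) \ B').card := by
        have h1 : (Finset.Ici i).card = m - (i : ℕ) := Fin.card_Ici i
        have h2 : B'.card ≤ b := hB'card ▸ hBb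
        have := Finset.le_card_sdiff B' (Finset.Ici i)
        omega
      obtain ⟨j, hj⟩ := Finset.card_pos.mp hcard
      rw [Finset.mem_sdiff, Finset.mem_Ici] at hj
      have hgood : σ j ∈ Bᶜ := by
        rw [Finset.mem_compl]; exact fun h => hj.2 ((hB'mem j).mpr h)
      have h1 : v (σ i) ≤ v (σ j) := hmono hj.1
      have h2 := (abs_le.mp (hmax _ hgood)).2
      linarith
    -- lower bound: some good index below i
    have hdn : μ - s ≤ v (σ i) := by
      have hcard : 0 < ((Finset.Iic i) \ B').card := by
        have h1 : (Finset.Iic i).card = (i : ℕ) + 1 := Fin.card_Iic i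
        have h2 : B'.card ≤ b := hB'card ▸ hBb
        have := Finset.le_card_sdiff B' (Finset.Iic i)
        omega
      obtain ⟨j, hj⟩ := Finset.card_pos.mp hcard
      rw [Finset.mem_sdiff, Finset.mem_Iic] at hj
      have hgood : σ j ∈ Bᶜ := by
        rw [Finset.mem_compl]; exact fun h => hj.2 ((hB'mem j).mpr h)
      have h1 : v (σ j) ≤ v (σ i) := hmono hj.1
      have h2 := (abs_le.mp (hmax _ hgood)).1
      linarith
    rw [abs_le]; constructor <;> linarith
  -- the kept set in original coordinates
  set K : Finset (Fin m) := T.image σ with hK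
  have hKcard : K.card = m - 2 * b := by
    rw [hK, Finset.card_image_of_injective _ σ.injective]
    have : T.image (Fin.val) = Finset.Ico b (m - b) := by
      ext n
      simp only [Finset.mem_image, hT, Finset.mem_filter, Finset.mem_univ, true_and,
        Finset.mem_Ico]
      constructor
      · rintro ⟨i, ⟨h1, h2⟩, rfl⟩; exact ⟨h1, h2⟩
      · rintro ⟨h1, h2⟩
        exact ⟨⟨n, by omega⟩, ⟨h1, h2⟩, rfl⟩
    have hc := congrArg Finset.card this
    rw [Finset.card_image_of_injective _ Fin.val_injective, Nat.card_Ico] at hc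
    omega
  have hKsum : ∑ i ∈ T, v (σ i) = ∑ j ∈ K, v j := by
    rw [hK, Finset.sum_image (fun i _ j _ h => σ.injective h)]
  have hKmax : ∀ j ∈ K, |v j - μ| ≤ s := by
    intro j hj
    rw [hK, Finset.mem_image] at hj
    obtain ⟨i, hi, rfl⟩ := hj
    exact hkept i hi
  -- the real denominator
  have hmpos : (0:ℝ) < m := by exact_mod_cast hm
  set c : ℝ := (m : ℝ) - 2 * b with hc
  have hcpos : (0:ℝ) < c := by
    have : (2 * b : ℝ) < m := by exact_mod_cast h2b
    simp [hc]; linarith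
  have hKcardR : (K.card : ℝ) = c := by
    rw [hKcard, hc]; push_cast [Nat.cast_sub (le_of_lt h2b)]; ring
  -- nonempty good set, nonneg s and t
  have ht0 : 0 ≤ t := le_trans (abs_nonneg _) havg
  have hBclt : B.card < m := by omega
  have hBc : Bᶜ.card = m - B.card := by
    rw [Finset.card_compl, Fintype.card_fin]
  have hBcne : Bᶜ.Nonempty := by
    rw [← Finset.card_pos, hBc]; omega
  have hs0 : 0 ≤ s := by
    obtain ⟨j, hj⟩ := hBcne
    exact le_trans (abs_nonneg _) (hmax j hj)
  -- decompose the centered sum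
  set f : Fin m → ℝ := fun j => v j - μ with hf
  have hd1 : ∑ j ∈ K \ Bᶜ, f j + ∑ j ∈ K ∩ Bᶜ, f j = ∑ j ∈ K, f j := by
    have := Finset.sum_sdiff (Finset.inter_subset_left (s₁ := K) (s₂ := Bᶜ)) (f := f)
    rwa [Finset.sdiff_inter_self_left] at this
  have hd2 : ∑ j ∈ Bᶜ \ K, f j + ∑ j ∈ K ∩ Bᶜ, f j = ∑ j ∈ Bᶜ, f j := by
    have := Finset.sum_sdiff (Finset.inter_subset_left (s₁ := Bᶜ) (s₂ := K)) (f := f)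
    rwa [Finset.sdiff_inter_self_left, Finset.inter_comm] at this
  -- bound the three pieces
  have hA1 : |∑ j ∈ Bᶜ, f j| ≤ (m : ℝ) * t := by
    have hcne : (Bᶜ.card : ℝ) ≠ 0 := by
      have := Finset.card_pos.mpr hBcne
      positivity
    have hsum : ∑ j ∈ Bᶜ, f j = (Bᶜ.card : ℝ) * ((∑ i ∈ Bᶜ, v i) / (Bᶜ.card : ℝ) - μ) := by
      rw [hf, Finset.sum_sub_distrib, Finset.sum_const, nsmul_eq_mul,
        mul_sub, mul_div_cancel₀ _ hcne]
    rw [hsum, abs_mul, abs_of_nonneg (by positivity : (0:ℝ) ≤ (Bᶜ.card : ℝ))]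
    have h1 : (Bᶜ.card : ℝ) ≤ m := by
      exact_mod_cast Finset.card_le_card (Finset.subset_univ Bᶜ) |>.trans
        (le_of_eq (Finset.card_univ.trans (Fintype.card_fin m)))
    calc (Bᶜ.card : ℝ) * |(∑ i ∈ Bᶜ, v i) / (Bᶜ.card : ℝ) - μ|
        ≤ (Bᶜ.card : ℝ) * t := by
          exact mul_le_mul_of_nonneg_left havg (by positivity)
      _ ≤ (m : ℝ) * t := mul_le_mul_of_nonneg_right h1 ht0
  have habs_sum : ∀ (S : Finset (Fin m)), (∀ j ∈ S, |f j| ≤ s) →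
      |∑ j ∈ S, f j| ≤ (S.card : ℝ) * s := by
    intro S hS
    calc |∑ j ∈ S, f j| ≤ ∑ j ∈ S, |f j| := Finset.abs_sum_le_sum_abs _ _
      _ ≤ ∑ _j ∈ S, s := Finset.sum_le_sum hS
      _ = (S.card : ℝ) * s := by rw [Finset.sum_const, nsmul_eq_mul]
  have hA2 : |∑ j ∈ Bᶜ \ K, f j| ≤ 2 * (b : ℝ) * s := by
    have hsub : Bᶜ \ K ⊆ Kᶜ := by
      intro j hj
      rw [Finset.mem_sdiff] at hj
      rw [Finset.mem_compl]; exact hj.2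
    have hcard : ((Bᶜ \ K).card : ℝ) ≤ 2 * (b : ℝ) := by
      have h1 : (Bᶜ \ K).card ≤ Kᶜ.card := Finset.card_le_card hsub
      have h2 : Kᶜ.card = 2 * b := by
        rw [Finset.card_compl, Fintype.card_fin, hKcard]; omega
      have : (Bᶜ \ K).card ≤ 2 * b := by omega
      exact_mod_cast this
    have := habs_sum (Bᶜ \ K) (fun j hj => hmax j (Finset.mem_sdiff.mp hj).1)
    calc |∑ j ∈ Bᶜ \ K, f j| ≤ ((Bᶜ \ K).card : ℝ) * s := this
      _ ≤ 2 * (b : ℝ) * s := mul_le_mul_of_nonneg_right hcard hs0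
  have hA3 : |∑ j ∈ K \ Bᶜ, f j| ≤ (b : ℝ) * s := by
    have hsub : K \ Bᶜ ⊆ B := by
      intro j hj
      rw [Finset.mem_sdiff, Finset.mem_compl, not_not] at hj
      exact hj.2
    have hcard : ((K \ Bᶜ).card : ℝ) ≤ (b : ℝ) := by
      have : (K \ Bᶜ).card ≤ b := le_trans (Finset.card_le_card hsub) hBb
      exact_mod_cast this
    have := habs_sum (K \ Bᶜ) (fun j hj => hKmax j (Finset.mem_sdiff.mp hj).1)
    calc |∑ j ∈ K \ Bᶜ, f j| ≤ ((K \ Bᶜ).card : ℝ) * s := this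
      _ ≤ (b : ℝ) * s := mul_le_mul_of_nonneg_right hcard hs0
  -- total bound on the centered sum
  have hS : |∑ j ∈ K, f j| ≤ (m : ℝ) * t + 3 * (b : ℝ) * s := by
    have : ∑ j ∈ K, f j = (∑ j ∈ Bᶜ, f j) - (∑ j ∈ Bᶜ \ K, f j) + (∑ j ∈ K \ Bᶜ, f j) := by
      linarith
    rw [this]
    calc |(∑ j ∈ Bᶜ, f j) - (∑ j ∈ Bᶜ \ K, f j) + (∑ j ∈ K \ Bᶜ, f j)|
        ≤ |(∑ j ∈ Bᶜ, f j) - (∑ j ∈ Bᶜ \ K, f j)| + |∑ j ∈ K \ Bᶜ, f j| := abs_add_le _ _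
      _ ≤ |∑ j ∈ Bᶜ, f j| + |∑ j ∈ Bᶜ \ K, f j| + |∑ j ∈ K \ Bᶜ, f j| := by
          have := abs_sub (∑ j ∈ Bᶜ, f j) (∑ j ∈ Bᶜ \ K, f j)
          linarith [abs_sub_abs_le_abs_sub (∑ j ∈ Bᶜ, f j) (∑ j ∈ Bᶜ \ K, f j),
            abs_sub (∑ j ∈ Bᶜ, f j) (∑ j ∈ Bᶜ \ K, f j)]
      _ ≤ (m : ℝ) * t + 2 * (b : ℝ) * s + (b : ℝ) * s := by linarith
      _ = (m : ℝ) * t + 3 * (b : ℝ) * s := by ring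
  -- rewrite the trimmed mean
  have htm : trimmedMean b v - μ = (∑ j ∈ K, f j) / c := by
    rw [trimmedMean, ← hT, hKsum]
    rw [hf]
    rw [Finset.sum_sub_distrib, Finset.sum_const, nsmul_eq_mul, hKcardR]
    rw [sub_div, mul_div_cancel_left₀ _ (ne_of_gt hcpos)]
  rw [htm, abs_div, abs_of_pos hcpos]
  have hrhs : (t + 3 * β * s) / (1 - 2 * β) = ((m : ℝ) * t + 3 * (b : ℝ) * s) / c := by
    have h12 : (0:ℝ) < 1 - 2 * β := by linarith
    rw [hc, hb]
    rw [show (m : ℝ) - 2 * (β * m) = (1 - 2 * β) * m by ring,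
      show (m : ℝ) * t + 3 * (β * m) * s = (t + 3 * β * s) * m by ring]
    rw [mul_comm (1 - 2*β) (m:ℝ), mul_comm (t + 3*β*s) (m:ℝ),
      mul_div_mul_left _ _ (ne_of_gt hmpos)]
  rw [hrhs]
  exact div_le_div_of_nonneg_right hS hcpos.le
end
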